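/- arXiv:1806.11061 — 3 statements merged into one kernel-verified Lean document; each statement's English description precedes it below -/
import Mathlib

section
/- Let n, r, k be natural numbers with r ≥ 1 and k + r ≤ n + 1, and let 𝒞 = {{1,...,r-1} ∪ {i} : r ≤ i ≤ r+k-1} ⊆ [n]^{(r)} be the initial segment of the lexicographic order on r-sets of size k. Then the upper shadow satisfies |∂⁺𝒞| = ∑_{i=0}^{k-1} (n - r - i) = C(n-r+1, 2) - C(n-r-k+1, 2). -/
open Finset

/-- The upper shadow of a family of subsets of `{1,...,n}`:
`∂⁺𝒜 = {A ∪ {i} : A ∈ 𝒜, i ∈ {1,...,n} \ A}`. -/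
def upperShadowIn (n : ℕ) (𝒜 : Finset (Finset ℕ)) : Finset (Finset ℕ) :=
  𝒜.biUnion (fun A => (Finset.Icc 1 n \ A).image (fun i => insert i A))

/-- `𝒞 = {{1,...,r-1} ∪ {i} : r ≤ i ≤ r+k-1}`, the initial segment of lex on
`[n]^{(r)}` of size `k`. -/
def lexInitSeg (r k : ℕ) : Finset (Finset ℕ) :=
  (Finset.Ico r (r + k)).image (fun i => insert i (Finset.Icc 1 (r - 1)))

/-!
Every set of `∂⁺𝒞` has the form `{1, …, r-1} ∪ {a, b}` with `r ≤ a < r + k` and `a < b ≤ n`, and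
determines the pair `(a, b)`; so `|∂⁺𝒞| = ∑_{a = r}^{r+k-1} (n - a)`, and the closed form is the
telescoping of `C(j + 1, 2) = C(j, 2) + j`.
-/

lemma Finset.eq_and_eq_of_insert_insert_eq {α : Type*} [LinearOrder α] {C : Finset α}
    {a b a' b' : α} (hab : a < b) (hab' : a' < b') (ha : a ∉ C) (hb : b ∉ C)
    (ha' : a' ∉ C) (hb' : b' ∉ C) (h : insert a (insert b C) = insert a' (insert b' C)) :
    a = a' ∧ b = b' := by
  have mem_iff (x : α) (hx : x ∉ C) : x = a ∨ x = b ↔ x = a' ∨ x = b' := by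
    simpa [hx] using congrArg (x ∈ ·) h
  have := mem_iff a ha; have := mem_iff b hb; have := mem_iff a' ha'; have := mem_iff b' hb'
  grind

lemma notMem_Icc_one_sub_one_of_le {r x : ℕ} (hx : r ≤ x) : x ∉ Icc 1 (r - 1) := by
  simp only [mem_Icc]; omega

lemma upperShadowIn_lexInitSeg {n r k : ℕ} (hk : k + r ≤ n + 1) :
    upperShadowIn n (lexInitSeg r k) =
      ((Ico r (r + k)).sigma (fun a => Ioc a n)).image
        (fun p => insert p.1 (insert p.2 (Icc 1 (r - 1)))) := by
  ext s
  simp only [upperShadowIn, lexInitSeg, mem_biUnion, mem_image, mem_sdiff, mem_Ico, mem_Icc,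
    mem_sigma, mem_Ioc, exists_exists_and_eq_and, Sigma.exists]
  constructor
  · rintro ⟨i, hi, j, ⟨⟨hj1, hjn⟩, hjA⟩, rfl⟩
    rw [mem_insert, mem_Icc, not_or] at hjA
    rcases lt_or_gt_of_ne hjA.1 with hji | hij
    · exact ⟨j, i, ⟨⟨by omega, by omega⟩, hji, by omega⟩, rfl⟩
    · exact ⟨i, j, ⟨hi, hij, hjn⟩, insert_comm _ _ _⟩
  · rintro ⟨a, b, ⟨ha, hab, hbn⟩, rfl⟩
    refine ⟨a, ha, b, ⟨⟨by omega, hbn⟩, ?_⟩, insert_comm _ _ _⟩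
    rw [mem_insert, not_or]
    exact ⟨hab.ne', notMem_Icc_one_sub_one_of_le (by omega)⟩

lemma card_upperShadowIn_lexInitSeg {n r k : ℕ} (hk : k + r ≤ n + 1) :
    #(upperShadowIn n (lexInitSeg r k)) = ∑ i ∈ range k, (n - r - i) := by
  have hinj : Set.InjOn (fun p : (_ : ℕ) × ℕ => insert p.1 (insert p.2 (Icc 1 (r - 1))))
      ((Ico r (r + k)).sigma (fun a => Ioc a n)) := by
    rintro ⟨a, b⟩ hp ⟨a', b'⟩ hp' h
    simp only [coe_sigma, Set.mem_sigma_iff, mem_coe, mem_Ico, mem_Ioc] at hp hp'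
    obtain ⟨rfl, rfl⟩ := eq_and_eq_of_insert_insert_eq hp.2.1 hp'.2.1
      (notMem_Icc_one_sub_one_of_le hp.1.1) (notMem_Icc_one_sub_one_of_le (by omega))
      (notMem_Icc_one_sub_one_of_le hp'.1.1) (notMem_Icc_one_sub_one_of_le (by omega)) h
    rfl
  rw [upperShadowIn_lexInitSeg hk, card_image_of_injOn hinj, card_sigma, sum_Ico_eq_sum_range]
  simp only [Nat.card_Ioc, add_tsub_cancel_left, Nat.sub_sub]

lemma sum_range_sub_add_choose_two (m k : ℕ) :
    ∑ i ∈ range k, (m - i) + (m - k + 1).choose 2 = (m + 1).choose 2 := by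
  induction k with
  | zero => simp
  | succ k ih =>
    have h : (m - (k + 1) + 1).choose 2 = (m - k).choose 2 := by
      rcases lt_or_ge k m with hkm | hkm
      · congr 1; omega
      · rw [show m - (k + 1) + 1 = 1 by omega, show m - k = 0 by omega]; rfl
    rw [sum_range_succ, h, ← ih, Nat.choose_succ_succ' (m - k), Nat.choose_one_right]
    ring

theorem stmt_12_general (n r k : ℕ) (hk : k + r ≤ n + 1) :
    (upperShadowIn n (lexInitSeg r k)).card = ∑ i ∈ Finset.range k, (n - r - i) ∧
    (∑ i ∈ Finset.range k, (n - r - i))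
      = (n - r + 1).choose 2 - (n - r - k + 1).choose 2 :=
  ⟨card_upperShadowIn_lexInitSeg hk,
    Nat.eq_sub_of_add_eq (sum_range_sub_add_choose_two _ _)⟩

/-- For `r ≥ 1` and `k + r ≤ n + 1`,
`|∂⁺𝒞| = ∑_{i=0}^{k-1} (n - r - i) = C(n-r+1,2) - C(n-r-k+1,2)`. -/
theorem stmt_12 (n r k : ℕ) (hr : 1 ≤ r) (hk : k + r ≤ n + 1) :
    (upperShadowIn n (lexInitSeg r k)).card = ∑ i ∈ Finset.range k, (n - r - i) ∧
    (∑ i ∈ Finset.range k, (n - r - i))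
      = (n - r + 1).choose 2 - (n - r - k + 1).choose 2 :=
  stmt_12_general n r k hk
end

section
/- (Local LYM for upper shadows, with equality cases) Let 𝒜 ⊆ [n]^{(r)} with r < n. Then |∂⁺𝒜| / C(n, r+1) ≥ |𝒜| / C(n, r), and equality holds if and only if 𝒜 = ∅ or 𝒜 = [n]^{(r)}. -/
/-!
Double count the pairs `s ⊆ t` with `s ∈ 𝒜` and `t ∈ ∂⁺𝒜`: every `s` lies in exactly `n - r`
such `t`, and every `t` contains at most `r + 1` members of `𝒜`. Since
`C(n, r+1) (r+1) = C(n, r) (n - r)`, this is the inequality. Equality forces every `t ∈ ∂⁺𝒜` to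
have all its `r`-subsets in `𝒜`, so `𝒜` is closed under the exchanges `s ↦ s - x + y`; these
connect any two `r`-sets, so a nonempty such `𝒜` is all of `[n]^{(r)}`.
-/

open Finset

namespace Finset

open scoped FinsetFamily

variable {α : Type*} [DecidableEq α] {𝒜 : Finset (Finset α)} {r : ℕ}
  {s t : Finset α}

lemma bipartiteBelow_eq_inter_powersetCard (h𝒜 : (𝒜 : Set (Finset α)).Sized r) :
    𝒜.bipartiteBelow (· ⊆ ·) t = 𝒜 ∩ t.powersetCard r := by
  ext s
  simp only [mem_bipartiteBelow, mem_inter, mem_powersetCard]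
  exact ⟨fun ⟨hs, hst⟩ ↦ ⟨hs, hst, h𝒜 hs⟩, fun ⟨hs, hst, _⟩ ↦ ⟨hs, hst⟩⟩

lemma card_bipartiteBelow_le (h𝒜 : (𝒜 : Set (Finset α)).Sized r) (ht : #t = r + 1) :
    #(𝒜.bipartiteBelow (· ⊆ ·) t) ≤ r + 1 := by
  rw [bipartiteBelow_eq_inter_powersetCard h𝒜, ← Nat.choose_succ_self_right r, ← ht,
    ← card_powersetCard]
  exact card_le_card inter_subset_right

lemma card_bipartiteBelow_eq_iff (h𝒜 : (𝒜 : Set (Finset α)).Sized r) (ht : #t = r + 1) :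
    #(𝒜.bipartiteBelow (· ⊆ ·) t) = r + 1 ↔ t.powersetCard r ⊆ 𝒜 := by
  rw [bipartiteBelow_eq_inter_powersetCard h𝒜, ← Nat.choose_succ_self_right r, ← ht,
    ← card_powersetCard, ← inter_eq_right]
  exact ⟨eq_of_subset_of_card_le inter_subset_right ∘ ge_of_eq, congrArg card⟩

variable [Fintype α]

lemma bipartiteAbove_upShadow_eq_image (h𝒜 : (𝒜 : Set (Finset α)).Sized r) (hs : s ∈ 𝒜) :
    (∂⁺ 𝒜).bipartiteAbove (· ⊆ ·) s = sᶜ.image (insert · s) := by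
  ext t
  simp only [mem_bipartiteAbove, mem_image, mem_compl]
  constructor
  · rintro ⟨ht, hst⟩
    exact exists_eq_insert_iff.2 ⟨hst, by rw [h𝒜 hs, h𝒜.upShadow ht]⟩
  · rintro ⟨a, ha, rfl⟩
    exact ⟨insert_mem_upShadow hs ha, subset_insert _ _⟩

lemma card_bipartiteAbove_upShadow (h𝒜 : (𝒜 : Set (Finset α)).Sized r) (hs : s ∈ 𝒜) :
    #((∂⁺ 𝒜).bipartiteAbove (· ⊆ ·) s) = Fintype.card α - r := by
  rw [bipartiteAbove_upShadow_eq_image h𝒜 hs, card_image_of_injOn (insert_inj_on' s),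
    card_compl, h𝒜 hs]

lemma card_mul_eq_sum_card_bipartiteBelow (h𝒜 : (𝒜 : Set (Finset α)).Sized r) :
    #𝒜 * (Fintype.card α - r) = ∑ t ∈ ∂⁺ 𝒜, #(𝒜.bipartiteBelow (· ⊆ ·) t) := by
  rw [← sum_card_bipartiteAbove_eq_sum_card_bipartiteBelow, ← smul_eq_mul, ← sum_const]
  exact (sum_congr rfl fun s hs ↦ card_bipartiteAbove_upShadow h𝒜 hs).symm

theorem card_mul_le_card_upShadow_mul (h𝒜 : (𝒜 : Set (Finset α)).Sized r) :
    #𝒜 * (Fintype.card α - r) ≤ #(∂⁺ 𝒜) * (r + 1) := by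
  rw [card_mul_eq_sum_card_bipartiteBelow h𝒜, ← smul_eq_mul]
  exact sum_le_card_nsmul _ _ _ fun t ht ↦ card_bipartiteBelow_le h𝒜 (h𝒜.upShadow ht)

theorem card_mul_eq_card_upShadow_mul_iff (h𝒜 : (𝒜 : Set (Finset α)).Sized r) :
    #𝒜 * (Fintype.card α - r) = #(∂⁺ 𝒜) * (r + 1) ↔ ∀ t ∈ ∂⁺ 𝒜, t.powersetCard r ⊆ 𝒜 := by
  rw [card_mul_eq_sum_card_bipartiteBelow h𝒜, ← smul_eq_mul, ← sum_const,
    sum_eq_sum_iff_of_le fun t ht ↦ card_bipartiteBelow_le h𝒜 (h𝒜.upShadow ht)]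
  exact forall₂_congr fun t ht ↦ card_bipartiteBelow_eq_iff h𝒜 (h𝒜.upShadow ht)

lemma insert_erase_mem_of_forall_powersetCard_subset (h𝒜 : (𝒜 : Set (Finset α)).Sized r)
    (h𝒜₁ : ∀ t ∈ ∂⁺ 𝒜, t.powersetCard r ⊆ 𝒜) (hs : s ∈ 𝒜) {x y : α} (hx : x ∈ s)
    (hy : y ∉ s) : insert y (s.erase x) ∈ 𝒜 := by
  refine h𝒜₁ _ (insert_mem_upShadow hs hy) (mem_powersetCard.2 ⟨?_, ?_⟩)
  · exact insert_subset_insert _ (erase_subset _ _)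
  · rw [card_insert_of_notMem fun h ↦ hy (mem_of_mem_erase h), card_erase_add_one hx, h𝒜 hs]

theorem mem_of_forall_powersetCard_subset (h𝒜 : (𝒜 : Set (Finset α)).Sized r)
    (h𝒜₁ : ∀ t ∈ ∂⁺ 𝒜, t.powersetCard r ⊆ 𝒜) (hs : s ∈ 𝒜) (ht : #t = r) : t ∈ 𝒜 := by
  obtain ⟨k, hk⟩ : ∃ k, #(s \ t) = k := ⟨_, rfl⟩
  induction k generalizing s with
  | zero =>
    have hst : s ⊆ t := sdiff_eq_empty_iff_subset.1 (card_eq_zero.1 hk)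
    rwa [← eq_of_subset_of_card_le hst (by rw [ht, h𝒜 hs])]
  | succ k ih =>
    obtain ⟨x, hx⟩ : (s \ t).Nonempty := card_pos.1 (by omega)
    obtain ⟨y, hy⟩ : (t \ s).Nonempty :=
      card_pos.1 (by rw [← card_sdiff_comm (by rw [ht, h𝒜 hs])]; omega)
    rw [mem_sdiff] at hx hy
    refine ih (insert_erase_mem_of_forall_powersetCard_subset h𝒜 h𝒜₁ hs hx.1 hy.2) ?_
    have hsdiff : insert y (s.erase x) \ t = (s \ t).erase x := by
      ext z
      simp only [mem_sdiff, mem_insert, mem_erase]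
      grind
    rw [hsdiff, card_erase_of_mem (mem_sdiff.2 hx), hk, Nat.add_sub_cancel]

end Finset

section Binomial

variable {K : Type*} [Field K] [CharZero K] {n r : ℕ}

lemma div_choose_eq_mul_div (hr : r < n) (a : K) :
    a / n.choose r = a * (n - r : ℕ) / (n.choose (r + 1) * (r + 1) : ℕ) := by
  rw [Nat.choose_succ_right_eq, Nat.cast_mul,
    mul_div_mul_right _ _ (Nat.cast_ne_zero.2 (Nat.sub_ne_zero_of_lt hr))]

lemma div_choose_succ_eq_mul_div (a : K) :
    a / n.choose (r + 1) = a * (r + 1 : ℕ) / (n.choose (r + 1) * (r + 1) : ℕ) := by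
  rw [Nat.cast_mul, mul_div_mul_right _ _ (Nat.cast_ne_zero.2 r.succ_ne_zero)]

end Binomial

/-- Local LYM for upper shadows with equality cases: for `𝒜 ⊆ [n]^{(r)}` with `r < n`,
`|∂⁺𝒜| / C(n,r+1) ≥ |𝒜| / C(n,r)`, with equality iff `𝒜 = ∅` or `𝒜 = [n]^{(r)}`. -/
theorem stmt_14 (n r : ℕ) (hr : r < n) (𝒜 : Finset (Finset (Fin n)))
    (h𝒜 : 𝒜 ⊆ Finset.powersetCard r (Finset.univ : Finset (Fin n))) :
    ((𝒜.card : ℚ) / n.choose r ≤ (Finset.upShadow 𝒜).card / n.choose (r + 1)) ∧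
    (((Finset.upShadow 𝒜).card : ℚ) / n.choose (r + 1) = (𝒜.card : ℚ) / n.choose r
      ↔ 𝒜 = ∅ ∨ 𝒜 = Finset.powersetCard r (Finset.univ : Finset (Fin n))) := by
  have hsized := subset_powersetCard_univ_iff.1 h𝒜
  have hD : (0 : ℚ) < (n.choose (r + 1) * (r + 1) : ℕ) := by
    have := Nat.choose_pos hr; positivity
  have hcount := card_mul_le_card_upShadow_mul hsized
  have hcount_eq := card_mul_eq_card_upShadow_mul_iff hsized
  rw [Fintype.card_fin] at hcount hcount_eq
  rw [div_choose_eq_mul_div hr, div_choose_succ_eq_mul_div, div_le_div_iff_of_pos_right hD,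
    div_left_inj' hD.ne']
  norm_cast
  refine ⟨hcount, ?_⟩
  rw [eq_comm, hcount_eq]
  constructor
  · intro h𝒜₁
    obtain rfl | ⟨s, hs⟩ := 𝒜.eq_empty_or_nonempty
    · exact .inl rfl
    · refine .inr (h𝒜.antisymm fun t ht ↦ ?_)
      exact mem_of_forall_powersetCard_subset hsized h𝒜₁ hs (mem_powersetCard.1 ht).2
  · rintro (rfl | rfl) t ht
    · simp at ht
    · exact powersetCard_mono (subset_univ t)
end

section
/- Let 𝒜 ⊆ [n]^{(r)} be an initial segment of the colexicographic order, and let i < j be elements of {1,...,n}. If |{A ∈ 𝒜 : i ∈ A}| = |{A ∈ 𝒜 : j ∈ A}|, then the transposition σ = (i j) fixes 𝒜 setwise: σ(𝒜) = 𝒜, where σ(𝒜) = {σ(A) : A ∈ 𝒜} and σ(A) = {σ(a) : a ∈ A}. -/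
open Finset Function

/-!
Let `σ` swap `i` and `j`. Sets containing both or neither of `i, j` are fixed by `σ`. If `A ∈ 𝒜`
contains `j` but not `i`, then `σ A` replaces `j` by the smaller `i`, so it lies below `A` in colex
and hence in `𝒜`. Thus `σ` injects `{A ∈ 𝒜 : j ∈ A, i ∉ A}` into `{A ∈ 𝒜 : i ∈ A, j ∉ A}`, and the
counting hypothesis says these two families have the same size, so `σ` is a bijection between
them. Being an involution, `σ` then maps `𝒜` into itself, hence onto itself.
-/

namespace Function.Involutive

variable {β : Type*} [DecidableEq β] {f : β → β}

lemma finset_image_eq_of_subset (hf : Involutive f) {s : Finset β} (h : s.image f ⊆ s) :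
    s.image f = s :=
  eq_of_subset_of_card_le h (card_image_of_injective _ hf.injective).ge

lemma mem_of_mapsTo_filter (hf : Involutive f) {s : Finset β} {p q : β → Prop}
    [DecidablePred p] [DecidablePred q] (hpq : ∀ x ∈ s, p x → f x ∈ s ∧ q (f x))
    (hcard : #(s.filter q) ≤ #(s.filter p)) {x : β} (hx : x ∈ s) (hqx : q x) : f x ∈ s := by
  have himage : (s.filter p).image f = s.filter q := by
    refine eq_of_subset_of_card_le (image_subset_iff.2 fun y hy => ?_) ?_
    · rw [mem_filter] at hy ⊢
      exact hpq y hy.1 hy.2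
    · rwa [card_image_of_injective _ hf.injective]
  obtain ⟨y, hy, rfl⟩ := mem_image.1 (himage ▸ mem_filter.2 ⟨hx, hqx⟩)
  rw [hf y]
  exact (mem_filter.1 hy).1

end Function.Involutive

namespace Finset

lemma card_filter_and_not_eq_of_card_filter_eq {β : Type*} {s : Finset β} {p q : β → Prop}
    [DecidablePred p] [DecidablePred q] (h : #(s.filter p) = #(s.filter q)) :
    #(s.filter fun x => p x ∧ ¬ q x) = #(s.filter fun x => q x ∧ ¬ p x) := by
  have hp := card_filter_add_card_filter_not (s := s.filter p) q
  have hq := card_filter_add_card_filter_not (s := s.filter q) p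
  simp only [filter_filter] at hp hq
  have hcomm : #(s.filter fun x => p x ∧ q x) = #(s.filter fun x => q x ∧ p x) := by
    simp only [and_comm]
  omega

variable {α : Type*} [DecidableEq α] {i j : α} {s : Finset α}

lemma mem_image_swap {a : α} : a ∈ s.image (Equiv.swap i j) ↔ Equiv.swap i j a ∈ s := by
  rw [← Equiv.coe_toEmbedding, ← map_eq_image, mem_map_equiv, Equiv.symm_swap]
  rfl

lemma card_image_swap : #(s.image (Equiv.swap i j)) = #s :=
  card_image_of_injective _ (Equiv.injective _)

lemma involutive_image_swap (i j : α) : Involutive fun s : Finset α => s.image (Equiv.swap i j) :=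
  fun s => by ext a; simp only [mem_image_swap, Equiv.swap_apply_self]

lemma image_swap_eq_self (h : i ∈ s ↔ j ∈ s) : s.image (Equiv.swap i j) = s := by
  ext a
  rw [mem_image_swap, Equiv.swap_apply_def]
  split_ifs with hai haj
  · subst hai; exact h.symm
  · subst haj; exact h
  · rfl

lemma toColex_image_swap_le [LinearOrder α] (hij : i ≤ j) (hj : j ∈ s) (hi : i ∉ s) :
    toColex (s.image (Equiv.swap i j)) ≤ toColex s := by
  rw [Colex.toColex_le_toColex]
  intro a ha has
  have hai : a = i := by
    rw [mem_image_swap, Equiv.swap_apply_def] at ha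
    split_ifs at ha with hai haj
    · exact hai
    · exact absurd ha hi
    · exact absurd ha has
  refine ⟨j, hj, by rwa [mem_image_swap, Equiv.swap_apply_right], hai ▸ hij⟩

end Finset

/-- If `𝒜 ⊆ [n]^{(r)}` is an initial segment of the colexicographic order, `i < j`,
and `|{A ∈ 𝒜 : i ∈ A}| = |{A ∈ 𝒜 : j ∈ A}|`, then the transposition `(i j)` fixes
`𝒜` setwise. -/
theorem stmt_17 (n r : ℕ) (𝒜 : Finset (Finset (Fin n)))
    (h𝒜 : 𝒜 ⊆ Finset.powersetCard r (Finset.univ : Finset (Fin n)))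
    (hinit : ∀ A ∈ 𝒜, ∀ B ∈ Finset.powersetCard r (Finset.univ : Finset (Fin n)),
      toColex B ≤ toColex A → B ∈ 𝒜)
    (i j : Fin n) (hij : i < j)
    (hcount : (𝒜.filter (fun A => i ∈ A)).card = (𝒜.filter (fun A => j ∈ A)).card) :
    𝒜.image (fun A => A.image (Equiv.swap i j)) = 𝒜 := by
  have hσ := involutive_image_swap i j
  have hcompress : ∀ A ∈ 𝒜, j ∈ A ∧ i ∉ A →
      A.image (Equiv.swap i j) ∈ 𝒜 ∧
        i ∈ A.image (Equiv.swap i j) ∧ j ∉ A.image (Equiv.swap i j) := by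
    rintro A hA ⟨hjA, hiA⟩
    have hAr := (mem_powersetCard.1 (h𝒜 hA)).2
    refine ⟨hinit A hA _ ?_ (toColex_image_swap_le hij.le hjA hiA), ?_⟩
    · exact mem_powersetCard.2 ⟨subset_univ _, card_image_swap.trans hAr⟩
    · rw [mem_image_swap, mem_image_swap, Equiv.swap_apply_left, Equiv.swap_apply_right]
      exact ⟨hjA, hiA⟩
  have hsub : 𝒜.image (fun A => A.image (Equiv.swap i j)) ⊆ 𝒜 := by
    refine image_subset_iff.2 fun A hA => ?_
    by_cases h : i ∈ A ↔ j ∈ A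
    · rwa [image_swap_eq_self h]
    by_cases hiA : i ∈ A
    · exact hσ.mem_of_mapsTo_filter (p := fun A => j ∈ A ∧ i ∉ A) (q := fun A => i ∈ A ∧ j ∉ A)
        hcompress (card_filter_and_not_eq_of_card_filter_eq hcount).le hA ⟨hiA, by tauto⟩
    · exact (hcompress A hA ⟨by tauto, hiA⟩).1
  exact hσ.finset_image_eq_of_subset hsub
end
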